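/- Let T ≺ T' be two s-decreasing trees in the s-weak order. Then there exists a tree-ascent (a,c) of T such that card_{T'}(c,a) > card_T(c,a). -/

import Mathlib

/-- Planar rooted trees: leaves are unlabeled; internal nodes carry a natural
number label and an ordered list of children. -/
inductive STree : Type where
  | leaf : STree
  | node : ℕ → List STree → STree

namespace STree

mutual
  /-- `x` occurs as the label of an internal node of the tree. -/
  def mem (x : ℕ) : STree → Bool
    | .leaf => false
    | .node a cs => x == a || memL x cs
  def memL (x : ℕ) : List STree → Bool
    | [] => false
    | t :: ts => mem x t || memL x ts
end

mutual
  /-- The list of internal node labels, in preorder. -/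
  def labels : STree → List ℕ
    | .leaf => []
    | .node a cs => a :: labelsL cs
  def labelsL : List STree → List ℕ
    | [] => []
    | t :: ts => labels t ++ labelsL ts
end

mutual
  /-- Local well-formedness for the signature `s` : an internal node labeled `a`
  has `s a + 1` children, and all labels below it are smaller than `a`. -/
  def wf (s : ℕ → ℕ) : STree → Prop
    | .leaf => True
    | .node a cs => cs.length = s a + 1 ∧ (∀ b ∈ labelsL cs, b < a) ∧ wfL s cs
  def wfL (s : ℕ → ℕ) : List STree → Prop
    | [] => True
    | t :: ts => wf s t ∧ wfL s ts
end

/-- `T` is an `s`-decreasing tree: its internal nodes are labeled bijectively by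
`1, …, n`, node `i` has `s i + 1` ordered children, and all descendants of a node
have smaller labels. -/
def IsSDecreasingTree (n : ℕ) (s : ℕ → ℕ) (T : STree) : Prop :=
  wf s T ∧ (labels T).Perm (List.range' 1 n)

/-- Index of the first tree of the list containing the label `x`. -/
def idxOf (x : ℕ) : List STree → ℕ
  | [] => 0
  | t :: ts => if mem x t then 0 else idxOf x ts + 1

mutual
  /-- The cardinality `card_T(y,x)` of the pair `(y,x)` in the tree:
  `0` if `x` is (weakly) left of `y`, `i` if `x` lies in the `i`-th child
  subtree of `y`, and `s y` if `x` is right of `y`. -/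
  def card (s : ℕ → ℕ) (y x : ℕ) : STree → ℕ
    | .leaf => 0
    | .node a cs => if a = y then idxOf x cs else cardL s y x cs
  def cardL (s : ℕ → ℕ) (y x : ℕ) : List STree → ℕ
    | [] => 0
    | t :: ts =>
      if mem y t then
        (if mem x t then card s y x t else if memL x ts then s y else 0)
      else (if mem x t then 0 else cardL s y x ts)
end

/-- The tree-inversion multiset of `T`, as a multiplicity function on pairs
`(y,x)` with `1 ≤ x < y ≤ n`. -/
def treeInv (n : ℕ) (s : ℕ → ℕ) (T : STree) : ℕ → ℕ → ℕ := fun y x =>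
  if 1 ≤ x ∧ x < y ∧ y ≤ n then card s y x T else 0

/-- A multi inversion set on `1, …, n` bounded by the weak composition `s`. -/
def IsMultiInvSet (n : ℕ) (s : ℕ → ℕ) (I : ℕ → ℕ → ℕ) : Prop :=
  (∀ y x, I y x ≤ s y) ∧ ∀ y x, ¬(1 ≤ x ∧ x < y ∧ y ≤ n) → I y x = 0

/-- Transitivity: for `a < b < c`, `card(c,b) = i` implies `card(b,a) = 0` or
`card(c,a) ≥ i`. -/
def InvTransitive (I : ℕ → ℕ → ℕ) : Prop :=
  ∀ a b c : ℕ, a < b → b < c → I b a = 0 ∨ I c b ≤ I c a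

/-- Planarity: for `a < b < c`, `card(c,a) = i` implies `card(b,a) = s b` or
`card(c,b) ≥ i`. -/
def InvPlanar (s : ℕ → ℕ) (I : ℕ → ℕ → ℕ) : Prop :=
  ∀ a b c : ℕ, a < b → b < c → I b a = s b ∨ I c a ≤ I c b

/-- An `s`-tree-inversion set: a bounded multi inversion set that is transitive
and planar. -/
def IsTreeInvSet (n : ℕ) (s : ℕ → ℕ) (I : ℕ → ℕ → ℕ) : Prop :=
  IsMultiInvSet n s I ∧ InvTransitive I ∧ InvPlanar s I

/-- Inclusion of multi inversion sets: pointwise comparison of multiplicities. -/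
def invLE (I J : ℕ → ℕ → ℕ) : Prop := ∀ y x, I y x ≤ J y x

/-- The `s`-weak order: inclusion of tree-inversion multisets. -/
def sWeakLE (n : ℕ) (s : ℕ → ℕ) (T R : STree) : Prop :=
  invLE (treeInv n s T) (treeInv n s R)

/-- Union of multi inversion sets: pointwise maximum. -/
def invUnion (I J : ℕ → ℕ → ℕ) : ℕ → ℕ → ℕ := fun y x => max (I y x) (J y x)

/-- Transitive closure: `tc I (c,a)` is the maximal value of `I (b₁, b₂)` over
all transitivity paths `c = b₁ > b₂ > … > b_k = a` (consecutive entries have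
positive multiplicity). -/
noncomputable def tc (I : ℕ → ℕ → ℕ) : ℕ → ℕ → ℕ := fun c a =>
  sSup {v | ∃ (b : ℕ) (l : List ℕ),
    List.Chain (fun u w => w < u ∧ 0 < I u w) c (b :: l) ∧
    (b :: l).getLast (List.cons_ne_nil b l) = a ∧ v = I c b}

/-- Adding the inversion `(c,a)`: increase its multiplicity by one. -/
def addInv (I : ℕ → ℕ → ℕ) (c a : ℕ) : ℕ → ℕ → ℕ := fun y x =>
  if y = c ∧ x = a then I y x + 1 else I y x

mutual
  /-- `a` is a (proper) descendant of the node labeled `c`. -/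
  def descIn (c a : ℕ) : STree → Bool
    | .leaf => false
    | .node b cs => (b == c && memL a cs) || descInL c a cs
  def descInL (c a : ℕ) : List STree → Bool
    | [] => false
    | t :: ts => descIn c a t || descInL c a ts
end

mutual
  /-- `a` belongs to the rightmost child subtree of the node labeled `c`. -/
  def inRight (c a : ℕ) : STree → Bool
    | .leaf => false
    | .node b cs =>
      (b == c && (match cs.getLast? with
        | some t => mem a t
        | none => false)) || inRightL c a cs
  def inRightL (c a : ℕ) : List STree → Bool
    | [] => false
    | t :: ts => inRight c a t || inRightL c a ts
end

mutual
  /-- `a` belongs to the leftmost child subtree of the node labeled `c`. -/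
  def inLeft (c a : ℕ) : STree → Bool
    | .leaf => false
    | .node b cs =>
      (b == c && (match cs.head? with
        | some t => mem a t
        | none => false)) || inLeftL c a cs
  def inLeftL (c a : ℕ) : List STree → Bool
    | [] => false
    | t :: ts => inLeft c a t || inLeftL c a ts
end

mutual
  /-- The rightmost child subtree of the node labeled `a` is empty (a leaf). -/
  def rightEmpty (a : ℕ) : STree → Bool
    | .leaf => false
    | .node b cs =>
      (b == a && (match cs.getLast? with
        | some .leaf => true
        | _ => false)) || rightEmptyL a cs
  def rightEmptyL (a : ℕ) : List STree → Bool
    | [] => false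
    | t :: ts => rightEmpty a t || rightEmptyL a ts
end

/-- `(a,c)` is a tree-ascent of `T`: `a` is a descendant of `c`, not in the
rightmost subtree of `c`; `a` lies in the rightmost subtree of any `b` with
`a < b < c` having `a` as a descendant; and if `s a > 0` the rightmost
(strict right) subtree of `a` is empty. -/
def IsTreeAscent (s : ℕ → ℕ) (T : STree) (a c : ℕ) : Prop :=
  a < c ∧ descIn c a T = true ∧ inRight c a T = false ∧
  (∀ b : ℕ, a < b → b < c → descIn b a T = true → inRight b a T = true) ∧
  (0 < s a → rightEmpty a T = true)

/-- `a` is the root label of the tree. -/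
def hasRoot (a : ℕ) : STree → Bool
  | .leaf => false
  | .node b _ => a == b

mutual
  /-- `a` is a direct child of the node `c`, but not its rightmost child. -/
  def nonRightChild (c a : ℕ) : STree → Bool
    | .leaf => false
    | .node b cs => (b == c && cs.dropLast.any (hasRoot a)) || nonRightChildL c a cs
  def nonRightChildL (c a : ℕ) : List STree → Bool
    | [] => false
    | t :: ts => nonRightChild c a t || nonRightChildL c a ts
end

/-- `(a,c)` is a Tamari-ascent of `T`: `a` is a non-right child of `c`. -/
def IsTamariAscent (T : STree) (a c : ℕ) : Prop :=
  a < c ∧ nonRightChild c a T = true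

mutual
  /-- Horizontal mirror image of a tree: the order of children is reversed at
  every internal node. -/
  def mirror : STree → STree
    | .leaf => .leaf
    | .node a cs => .node a (mirrorL cs)
  def mirrorL : List STree → List STree
    | [] => []
    | t :: ts => mirrorL ts ++ [mirror t]
end

/-- `T` is an `s`-Tamari tree: `card(c,a) ≤ card(c,b)` for all `a < b < c`. -/
def TamariProp (n : ℕ) (s : ℕ → ℕ) (T : STree) : Prop :=
  ∀ a b c : ℕ, a < b → b < c → treeInv n s T c a ≤ treeInv n s T c b

/-- `T` is an `s`-maximal-Tamari tree: `card(b,a) = s b` implies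
`card(c,a) = s c` for all `c > b`. -/
def MaxTamariProp (n : ℕ) (s : ℕ → ℕ) (T : STree) : Prop :=
  ∀ a b c : ℕ, 1 ≤ a → a < b → b < c → c ≤ n →
    treeInv n s T b a = s b → treeInv n s T c a = s c

/-- The projection `π↓` on inversion sets:
`card_Q(c,a) = min { card_T(c,b) : a ≤ b < c }`. -/
noncomputable def pidownInv (n : ℕ) (s : ℕ → ℕ) (T : STree) : ℕ → ℕ → ℕ :=
  fun c a => sInf {v | ∃ b : ℕ, a ≤ b ∧ b < c ∧ v = treeInv n s T c b}

open scoped Classical in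
/-- The projection `π↑` on inversion sets: `card_R(c,a) = s c` if there is
`a < b < c` with `card_T(b,a) = s b`, and `card_R(c,a) = card_T(c,a)` otherwise. -/
noncomputable def piupInv (n : ℕ) (s : ℕ → ℕ) (T : STree) : ℕ → ℕ → ℕ :=
  fun c a =>
    if 1 ≤ a ∧ a < c ∧ c ≤ n then
      if ∃ b : ℕ, a < b ∧ b < c ∧ treeInv n s T b a = s b then s c
      else treeInv n s T c a
    else 0

end STree

/-!
Tree-inversion multisets determine the tree, so some multiplicity strictly increases from `T`
to `T'`. In the topmost row `c` that changes, the increase sits at a descendant `a` of `c`: a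
common ancestor separating `a` from `c` would otherwise see their relative order change. Among
such pairs take `c` minimal and then `a` maximal; planarity of `T'` puts `a` in the rightmost
subtree of every ancestor `b` of `a` with `a < b < c`. If `s a > 0` and the rightmost subtree of
`a` is nonempty, its root inherits both properties by transitivity of `T'`, so descending along
rightmost subtrees ends at a tree-ascent.
-/

namespace STree

@[elab_as_elim]
theorem childInduction {motive : STree → Prop} (leaf : motive .leaf)
    (node : ∀ a cs, (∀ t ∈ cs, motive t) → motive (.node a cs)) : ∀ T, motive T
  | .leaf => leaf
  | .node a cs => node a cs fun t _ => childInduction leaf node t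
termination_by T => sizeOf T
decreasing_by
  simp only [STree.node.sizeOf_spec]
  have := List.sizeOf_lt_of_mem ‹t ∈ cs›
  omega

section Labels

variable {x a : ℕ} {t : STree} {ts cs : List STree}

theorem mem_node : mem x (.node a cs) = true ↔ x = a ∨ memL x cs = true := by
  simp [mem]

theorem mem_root : mem a (.node a cs) = true := mem_node.2 (.inl rfl)

theorem memL_cons : memL x (t :: ts) = true ↔ mem x t = true ∨ memL x ts = true := by
  simp [memL]

theorem memL_iff_exists : memL x cs = true ↔ ∃ t ∈ cs, mem x t = true := by
  induction cs with
  | nil => simp [memL]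
  | cons u us ih => simp [memL_cons, ih]

theorem memL_of_mem (ht : t ∈ cs) (hx : mem x t = true) : memL x cs = true :=
  memL_iff_exists.2 ⟨t, ht, hx⟩

mutual
theorem mem_iff_mem_labels (x : ℕ) : ∀ T : STree, mem x T = true ↔ x ∈ labels T
  | .leaf => by simp [mem, labels]
  | .node a cs => by simp [mem, labels, memL_iff_mem_labelsL x cs]
theorem memL_iff_mem_labelsL (x : ℕ) : ∀ cs : List STree, memL x cs = true ↔ x ∈ labelsL cs
  | [] => by simp [memL, labelsL]
  | t :: ts => by simp [memL, labelsL, memL_iff_mem_labelsL x ts, mem_iff_mem_labels x t]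
end

theorem wf_of_mem {s : ℕ → ℕ} (h : wfL s cs) (ht : t ∈ cs) : wf s t := by
  induction cs with
  | nil => cases ht
  | cons u us ih =>
    rcases List.mem_cons.1 ht with rfl | ht
    exacts [h.1, ih h.2 ht]

theorem lt_of_wf_node {s : ℕ → ℕ} (h : wf s (.node a cs)) (hx : memL x cs = true) : x < a :=
  h.2.1 x ((memL_iff_mem_labelsL x cs).1 hx)

theorem le_of_wf_node {s : ℕ → ℕ} (h : wf s (.node a cs)) (hx : mem x (.node a cs) = true) :
    x ≤ a := by
  rcases mem_node.1 hx with rfl | hx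
  exacts [le_rfl, (lt_of_wf_node h hx).le]

theorem memL_of_mem_node (hx : mem x (.node a cs) = true) (hne : x ≠ a) : memL x cs = true :=
  (mem_node.1 hx).resolve_left hne

theorem nodup_node (h : (labels (.node a cs)).Nodup) :
    memL a cs = false ∧ (labelsL cs).Nodup := by
  rw [labels, List.nodup_cons, ← memL_iff_mem_labelsL, Bool.not_eq_true] at h
  exact h

theorem ne_root_of_memL (h : (labels (.node a cs)).Nodup) (hx : memL x cs = true) : x ≠ a := by
  rintro rfl
  simp [(nodup_node h).1] at hx

theorem nodup_cons (h : (labelsL (t :: ts)).Nodup) :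
    (labels t).Nodup ∧ (labelsL ts).Nodup ∧ ∀ x, mem x t = true → memL x ts = false := by
  rw [labelsL, List.nodup_append] at h
  refine ⟨h.1, h.2.1, fun x hx => ?_⟩
  rw [← Bool.not_eq_true, memL_iff_mem_labelsL]
  exact fun hm => h.2.2 x ((mem_iff_mem_labels x t).1 hx) x hm rfl

theorem nodup_of_mem (h : (labelsL cs).Nodup) (ht : t ∈ cs) : (labels t).Nodup := by
  induction cs with
  | nil => cases ht
  | cons u us ih =>
    rcases List.mem_cons.1 ht with rfl | ht
    exacts [(nodup_cons h).1, ih (nodup_cons h).2.1 ht]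

theorem mem_eq_false_of_mem_tail {u : STree} (h : (labelsL (u :: ts)).Nodup) (ht : t ∈ ts)
    (hx : mem x t = true) : mem x u = false := by
  rw [← Bool.not_eq_true]
  exact fun hu => absurd (memL_of_mem ht hx) (by simp [(nodup_cons h).2.2 x hu])

theorem eq_of_mem_of_mem (h : (labelsL cs).Nodup) {u : STree} (ht : t ∈ cs) (hu : u ∈ cs)
    (hxt : mem x t = true) (hxu : mem x u = true) : t = u := by
  induction cs with
  | nil => cases ht
  | cons v vs ih =>
    rcases List.mem_cons.1 ht with rfl | ht'
    · rcases List.mem_cons.1 hu with rfl | hu'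
      · rfl
      · simp [mem_eq_false_of_mem_tail h hu' hxu] at hxt
    · rcases List.mem_cons.1 hu with rfl | hu'
      · simp [mem_eq_false_of_mem_tail h ht' hxt] at hxu
      · exact ih (nodup_cons h).2.1 ht' hu'

end Labels

section Index

variable {x y : ℕ} {t : STree} {ts cs : List STree}

theorem idxOf_cons_of_mem (h : mem x t = true) : idxOf x (t :: ts) = 0 := by
  simp [idxOf, h]

theorem idxOf_cons_of_not_mem (h : mem x t = false) : idxOf x (t :: ts) = idxOf x ts + 1 := by
  simp [idxOf, h]

theorem idxOf_lt_length (h : memL x cs = true) : idxOf x cs < cs.length := by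
  induction cs with
  | nil => simp [memL] at h
  | cons t ts ih =>
    cases hxt : mem x t
    · rw [idxOf_cons_of_not_mem hxt, List.length_cons]
      exact Nat.succ_lt_succ (ih ((memL_cons.1 h).resolve_left (by simp [hxt])))
    · simp [idxOf_cons_of_mem hxt]

theorem mem_getElem_idxOf (h : memL x cs = true) :
    mem x (cs[idxOf x cs]'(idxOf_lt_length h)) = true := by
  induction cs with
  | nil => simp [memL] at h
  | cons t ts ih =>
    cases hxt : mem x t
    · simp only [idxOf_cons_of_not_mem hxt, List.getElem_cons_succ]
      exact ih ((memL_cons.1 h).resolve_left (by simp [hxt]))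
    · simpa only [idxOf_cons_of_mem hxt, List.getElem_cons_zero] using hxt

theorem idxOf_eq_of_mem_getElem (hnd : (labelsL cs).Nodup) {i : ℕ} (hi : i < cs.length)
    (hx : mem x cs[i] = true) : idxOf x cs = i := by
  induction cs generalizing i with
  | nil => simp at hi
  | cons t ts ih =>
    cases i with
    | zero => exact idxOf_cons_of_mem hx
    | succ j =>
      rw [List.getElem_cons_succ] at hx
      rw [idxOf_cons_of_not_mem (mem_eq_false_of_mem_tail hnd (List.getElem_mem _) hx),
        ih (nodup_cons hnd).2.1 _ hx]

theorem idxOf_eq_of_mem (hnd : (labelsL cs).Nodup) (ht : t ∈ cs) (hx : mem x t = true)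
    (hy : mem y t = true) : idxOf x cs = idxOf y cs := by
  obtain ⟨i, hi, rfl⟩ := List.mem_iff_getElem.1 ht
  rw [idxOf_eq_of_mem_getElem hnd hi hx, idxOf_eq_of_mem_getElem hnd hi hy]

theorem exists_mem_of_idxOf_eq (hx : memL x cs = true) (hy : memL y cs = true)
    (h : idxOf x cs = idxOf y cs) : ∃ t ∈ cs, mem x t = true ∧ mem y t = true := by
  refine ⟨_, List.getElem_mem (idxOf_lt_length hx), mem_getElem_idxOf hx, ?_⟩
  simpa only [h] using mem_getElem_idxOf hy

end Index

mutual
def subAt (a : ℕ) : STree → Option STree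
  | .leaf => none
  | .node b cs => if a = b then some (.node b cs) else subAtL a cs
def subAtL (a : ℕ) : List STree → Option STree
  | [] => none
  | t :: ts => if mem a t then subAt a t else subAtL a ts
end

section Subtree

variable {a b x : ℕ} {T t u : STree} {cs : List STree}

theorem subAt_node_self : subAt a (.node a cs) = some (.node a cs) := by
  simp [subAt]

theorem subAt_node_of_ne (h : a ≠ b) : subAt a (.node b cs) = subAtL a cs := by
  simp [subAt, h]

theorem exists_mem_of_subAtL (h : subAtL a cs = some u) :
    ∃ t ∈ cs, mem a t = true ∧ subAt a t = some u := by
  induction cs with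
  | nil => simp [subAtL] at h
  | cons t ts ih =>
    rw [subAtL] at h
    split at h
    · exact ⟨t, List.mem_cons_self, by assumption, h⟩
    · obtain ⟨t', ht', h'⟩ := ih h
      exact ⟨t', List.mem_cons_of_mem _ ht', h'⟩

theorem subAtL_eq_of_mem (hnd : (labelsL cs).Nodup) (ht : t ∈ cs) (ha : mem a t = true) :
    subAtL a cs = subAt a t := by
  induction cs with
  | nil => cases ht
  | cons u us ih =>
    rcases List.mem_cons.1 ht with rfl | ht'
    · rw [subAtL, if_pos ha]
    · rw [subAtL, if_neg (by simp [mem_eq_false_of_mem_tail hnd ht' ha]),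
        ih (nodup_cons hnd).2.1 ht']

theorem mem_of_subAt (h : subAt a T = some u) (hx : mem x u = true) : mem x T = true := by
  induction T using childInduction with
  | leaf => simp [subAt] at h
  | node b cs ih =>
    by_cases hab : a = b
    · subst hab
      rw [subAt_node_self, Option.some_inj] at h
      rwa [h]
    · rw [subAt_node_of_ne hab] at h
      obtain ⟨t, ht, -, h⟩ := exists_mem_of_subAtL h
      exact mem_node.2 (.inr (memL_of_mem ht (ih t ht h)))

theorem exists_subAt (h : mem a T = true) : ∃ cs, subAt a T = some (.node a cs) := by
  induction T using childInduction with
  | leaf => simp [mem] at h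
  | node b cs ih =>
    by_cases hab : a = b
    · exact ⟨cs, hab ▸ subAt_node_self⟩
    · rw [subAt_node_of_ne hab]
      replace h := memL_of_mem_node h hab
      induction cs with
      | nil => simp [memL] at h
      | cons t ts ihL =>
        rw [subAtL]
        split
        · exact ih t List.mem_cons_self ‹_›
        · exact ihL (fun t ht => ih t (List.mem_cons_of_mem _ ht))
            ((memL_cons.1 h).resolve_left ‹_›)

theorem subAt_inherits {P : STree → Prop} (hP : ∀ b cs, P (.node b cs) → ∀ t ∈ cs, P t)
    (hT : P T) (h : subAt a T = some u) : P u := by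
  induction T using childInduction with
  | leaf => simp [subAt] at h
  | node b cs ih =>
    by_cases hab : a = b
    · subst hab
      rw [subAt_node_self, Option.some_inj] at h
      exact h ▸ hT
    · rw [subAt_node_of_ne hab] at h
      obtain ⟨t, ht, -, h⟩ := exists_mem_of_subAtL h
      exact ih t ht (hP b cs hT t ht) h

theorem wf_subAt {s : ℕ → ℕ} (hT : wf s T) (h : subAt a T = some u) : wf s u :=
  subAt_inherits (fun _ _ hw _ ht => wf_of_mem hw.2.2 ht) hT h

theorem nodup_subAt (hT : (labels T).Nodup) (h : subAt a T = some u) : (labels u).Nodup :=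
  subAt_inherits (P := fun T => (labels T).Nodup)
    (fun _ _ hn _ ht => nodup_of_mem (nodup_node hn).2 ht) hT h

theorem subAt_subAt (hnd : (labels T).Nodup) (h : subAt b T = some u) (hx : mem x u = true) :
    subAt x T = subAt x u := by
  induction T using childInduction with
  | leaf => simp [subAt] at h
  | node r cs ih =>
    by_cases hbr : b = r
    · subst hbr
      rw [subAt_node_self, Option.some_inj] at h
      rw [h]
    · rw [subAt_node_of_ne hbr] at h
      obtain ⟨t, ht, -, h⟩ := exists_mem_of_subAtL h
      have hxt := mem_of_subAt h hx
      rw [subAt_node_of_ne (ne_root_of_memL hnd (memL_of_mem ht hxt)),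
        subAtL_eq_of_mem (nodup_node hnd).2 ht hxt, ih t ht (nodup_of_mem (nodup_node hnd).2 ht) h]

end Subtree

-- `descIn`, `inRight` and `rightEmpty` are all instances of this predicate.
mutual
def holdsAt (c : ℕ) (p : List STree → Bool) : STree → Bool
  | .leaf => false
  | .node b cs => (b == c && p cs) || holdsAtL c p cs
def holdsAtL (c : ℕ) (p : List STree → Bool) : List STree → Bool
  | [] => false
  | t :: ts => holdsAt c p t || holdsAtL c p ts
end

section HoldsAt

variable {b c : ℕ} {p : List STree → Bool} {T : STree} {cs : List STree}

theorem holdsAtL_iff_exists : holdsAtL c p cs = true ↔ ∃ t ∈ cs, holdsAt c p t = true := by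
  induction cs with
  | nil => simp [holdsAtL]
  | cons t ts ih => simp [holdsAtL, ih]

theorem holdsAt_node :
    holdsAt c p (.node b cs) = true ↔
      (b = c ∧ p cs = true) ∨ ∃ t ∈ cs, holdsAt c p t = true := by
  simp [holdsAt, holdsAtL_iff_exists]

theorem mem_of_holdsAt (h : holdsAt c p T = true) : mem c T = true := by
  induction T using childInduction with
  | leaf => simp [holdsAt] at h
  | node b cs ih =>
    rcases holdsAt_node.1 h with ⟨rfl, -⟩ | ⟨t, ht, h⟩
    exacts [mem_root, mem_node.2 (.inr (memL_of_mem ht (ih t ht h)))]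

theorem holdsAt_iff (hnd : (labels T).Nodup) :
    holdsAt c p T = true ↔ ∃ cs, subAt c T = some (.node c cs) ∧ p cs = true := by
  induction T using childInduction with
  | leaf => simp [holdsAt, subAt]
  | node b cs ih =>
    rw [holdsAt_node]
    by_cases hbc : b = c
    · subst hbc
      have hL : ¬ ∃ t ∈ cs, holdsAt b p t = true := fun ⟨t, ht, h⟩ =>
        ne_root_of_memL hnd (memL_of_mem ht (mem_of_holdsAt h)) rfl
      simp [subAt_node_self, hL]
    · simp only [hbc, false_and, false_or, subAt_node_of_ne (Ne.symm hbc)]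
      constructor
      · rintro ⟨t, ht, h⟩
        obtain ⟨cs', hsub, hp⟩ := (ih t ht (nodup_of_mem (nodup_node hnd).2 ht)).1 h
        refine ⟨cs', ?_, hp⟩
        rw [subAtL_eq_of_mem (nodup_node hnd).2 ht (mem_of_holdsAt h), hsub]
      · rintro ⟨cs', hsub, hp⟩
        obtain ⟨t, ht, -, hsub⟩ := exists_mem_of_subAtL hsub
        exact ⟨t, ht, (ih t ht (nodup_of_mem (nodup_node hnd).2 ht)).2 ⟨cs', hsub, hp⟩⟩

end HoldsAt

mutual
theorem descIn_eq_holdsAt (c x : ℕ) : ∀ T, descIn c x T = holdsAt c (memL x) T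
  | .leaf => rfl
  | .node b cs => by simp [descIn, holdsAt, descInL_eq_holdsAtL c x cs]
theorem descInL_eq_holdsAtL (c x : ℕ) : ∀ cs, descInL c x cs = holdsAtL c (memL x) cs
  | [] => rfl
  | t :: ts => by simp [descInL, holdsAtL, descIn_eq_holdsAt c x t, descInL_eq_holdsAtL c x ts]
end

mutual
theorem inRight_eq_holdsAt (c x : ℕ) :
    ∀ T, inRight c x T = holdsAt c (fun cs => cs.getLast?.any (mem x)) T
  | .leaf => rfl
  | .node b cs => by
    cases h : cs.getLast? <;> simp [inRight, holdsAt, h, inRightL_eq_holdsAtL c x cs]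
theorem inRightL_eq_holdsAtL (c x : ℕ) :
    ∀ cs, inRightL c x cs = holdsAtL c (fun cs => cs.getLast?.any (mem x)) cs
  | [] => rfl
  | t :: ts => by
    simp [inRightL, holdsAtL, inRight_eq_holdsAt c x t, inRightL_eq_holdsAtL c x ts]
end

mutual
theorem rightEmpty_eq_holdsAt (a : ℕ) :
    ∀ T, rightEmpty a T = holdsAt a (fun cs => cs.getLast?.any (· matches .leaf)) T
  | .leaf => rfl
  | .node b cs => by
    rcases h : cs.getLast? with _ | _ | _ <;>
      simp [rightEmpty, holdsAt, h, rightEmptyL_eq_holdsAtL a cs]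
theorem rightEmptyL_eq_holdsAtL (a : ℕ) :
    ∀ cs, rightEmptyL a cs = holdsAtL a (fun cs => cs.getLast?.any (· matches .leaf)) cs
  | [] => rfl
  | t :: ts => by
    simp [rightEmptyL, holdsAtL, rightEmpty_eq_holdsAt a t, rightEmptyL_eq_holdsAtL a ts]
end

section Ancestry

variable {s : ℕ → ℕ} {a b c x y : ℕ} {T t : STree} {cs : List STree}

theorem descIn_iff (hnd : (labels T).Nodup) :
    descIn c x T = true ↔ ∃ cs, subAt c T = some (.node c cs) ∧ memL x cs = true := by
  rw [descIn_eq_holdsAt, holdsAt_iff hnd]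

theorem inRight_iff (hnd : (labels T).Nodup) :
    inRight c x T = true ↔
      ∃ cs, subAt c T = some (.node c cs) ∧ cs.getLast?.any (mem x) = true := by
  rw [inRight_eq_holdsAt, holdsAt_iff hnd]

theorem rightEmpty_iff (hnd : (labels T).Nodup) :
    rightEmpty a T = true ↔
      ∃ cs, subAt a T = some (.node a cs) ∧ cs.getLast? = some .leaf := by
  rw [rightEmpty_eq_holdsAt, holdsAt_iff hnd]
  refine exists_congr fun cs => and_congr_right fun _ => ?_
  rcases cs.getLast? with _ | _ | _ <;> simp

theorem descIn_node :
    descIn c x (.node b cs) = true ↔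
      (b = c ∧ memL x cs = true) ∨ ∃ t ∈ cs, descIn c x t = true := by
  simp only [descIn_eq_holdsAt, holdsAt_node]

theorem memL_of_descIn (hnd : (labels T).Nodup) (hc : subAt c T = some (.node c cs))
    (h : descIn c x T = true) : memL x cs = true := by
  obtain ⟨cs', hsub, hx⟩ := (descIn_iff hnd).1 h
  rw [hc, Option.some_inj, node.injEq] at hsub
  exact hsub.2 ▸ hx

theorem mem_left_of_descIn (h : descIn c x T = true) : mem c T = true :=
  mem_of_holdsAt (descIn_eq_holdsAt c x T ▸ h)

theorem mem_right_of_descIn (hnd : (labels T).Nodup) (h : descIn c x T = true) :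
    mem x T = true := by
  obtain ⟨cs, hsub, hx⟩ := (descIn_iff hnd).1 h
  exact mem_of_subAt hsub (mem_node.2 (.inr hx))

theorem descIn_lt (hwf : wf s T) (hnd : (labels T).Nodup) (h : descIn c x T = true) : x < c := by
  obtain ⟨cs, hsub, hx⟩ := (descIn_iff hnd).1 h
  exact lt_of_wf_node (wf_subAt hwf hsub) hx

theorem descIn_of_inRight (hnd : (labels T).Nodup) (h : inRight c x T = true) :
    descIn c x T = true := by
  obtain ⟨cs, hsub, hlast⟩ := (inRight_iff hnd).1 h
  obtain ⟨t, ht, hx⟩ := (Option.any_eq_true _ _).1 hlast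
  exact (descIn_iff hnd).2 ⟨cs, hsub, memL_of_mem (List.mem_of_getLast? ht) hx⟩

theorem mem_of_descIn_of_mem_child (hnd : (labels T).Nodup)
    (hc : subAt c T = some (.node c cs)) (ht : t ∈ cs) (hb : mem b t = true)
    (hbx : descIn b x T = true) : mem x t = true := by
  obtain ⟨csb, hsb, hx⟩ := (descIn_iff hnd).1 hbx
  have hndc := nodup_subAt hnd hc
  have hbt : subAt b t = some (.node b csb) := by
    rw [← subAtL_eq_of_mem (nodup_node hndc).2 ht hb,
      ← subAt_node_of_ne (ne_root_of_memL hndc (memL_of_mem ht hb)),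
      ← subAt_subAt hnd hc (mem_node.2 (.inr (memL_of_mem ht hb))), hsb]
  exact mem_of_subAt hbt (mem_node.2 (.inr hx))

theorem descIn_trans (hnd : (labels T).Nodup) (hcb : descIn c b T = true)
    (hbx : descIn b x T = true) : descIn c x T = true := by
  obtain ⟨cs, hsub, hb⟩ := (descIn_iff hnd).1 hcb
  obtain ⟨t, ht, hbt⟩ := memL_iff_exists.1 hb
  exact (descIn_iff hnd).2
    ⟨cs, hsub, memL_of_mem ht (mem_of_descIn_of_mem_child hnd hsub ht hbt hbx)⟩

theorem inRight_of_descIn (hnd : (labels T).Nodup) (hbx : inRight b x T = true)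
    (hxy : descIn x y T = true) : inRight b y T = true := by
  obtain ⟨cs, hsub, hlast⟩ := (inRight_iff hnd).1 hbx
  obtain ⟨t, ht, hx⟩ := (Option.any_eq_true _ _).1 hlast
  refine (inRight_iff hnd).2 ⟨cs, hsub, (Option.any_eq_true _ _).2 ⟨t, ht, ?_⟩⟩
  exact mem_of_descIn_of_mem_child hnd hsub (List.mem_of_getLast? ht) hx hxy

theorem descIn_of_common_descendant (hwf : wf s T) (hnd : (labels T).Nodup)
    (hbx : descIn b x T = true) (hax : descIn a x T = true) (hab : a < b) :
    descIn b a T = true := by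
  induction T using childInduction with
  | leaf => simp [descIn] at hbx
  | node r cs ih =>
    rcases descIn_node.1 hbx with ⟨rfl, -⟩ | ⟨t, ht, hbxt⟩
    · have ha := memL_of_mem_node (mem_left_of_descIn hax) hab.ne
      exact descIn_node.2 (.inl ⟨rfl, ha⟩)
    have hndt := nodup_of_mem (nodup_node hnd).2 ht
    rcases descIn_node.1 hax with ⟨rfl, -⟩ | ⟨t', ht', haxt⟩
    · have hbt := mem_left_of_descIn hbxt
      exact absurd (lt_of_wf_node hwf (memL_of_mem ht hbt)) hab.not_gt
    obtain rfl := eq_of_mem_of_mem (nodup_node hnd).2 ht ht' (mem_right_of_descIn hndt hbxt)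
      (mem_right_of_descIn (nodup_of_mem (nodup_node hnd).2 ht') haxt)
    exact descIn_node.2 (.inr ⟨t, ht, ih t ht (wf_of_mem hwf.2.2 ht) hndt hbxt haxt⟩)

theorem eq_or_descIn_of_descIn_childRoot (hwf : wf s T) (hnd : (labels T).Nodup)
    {cs' : List STree} (ha : subAt a T = some (.node a cs)) (hx : .node x cs' ∈ cs)
    (hb : descIn b x T = true) : b = a ∨ descIn b a T = true := by
  have hax : descIn a x T = true := (descIn_iff hnd).2 ⟨cs, ha, memL_of_mem hx mem_root⟩
  rcases lt_trichotomy a b with hab | rfl | hba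
  · exact .inr (descIn_of_common_descendant hwf hnd hb hax hab)
  · exact .inl rfl
  exfalso
  obtain ⟨t, ht, hbt⟩ := memL_iff_exists.1 <|
    memL_of_descIn hnd ha (descIn_of_common_descendant hwf hnd hax hb hba)
  obtain rfl := eq_of_mem_of_mem (nodup_node (nodup_subAt hnd ha)).2 ht hx
    (mem_of_descIn_of_mem_child hnd ha ht hbt hb) mem_root
  have hwfx : wf s (.node x cs') := wf_of_mem (wf_subAt hwf ha).2.2 ht
  exact absurd (le_of_wf_node hwfx hbt) (descIn_lt hwf hnd hb).not_ge

theorem exists_inRight_of_rightEmpty_eq_false (hwf : wf s T) (hnd : (labels T).Nodup)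
    (ha : mem a T = true) (hre : rightEmpty a T = false) :
    ∃ a', inRight a a' T = true ∧
      ∀ b, descIn b a' T = true → b = a ∨ descIn b a T = true := by
  obtain ⟨cs, hsub⟩ := exists_subAt ha
  have hne : cs ≠ [] := List.ne_nil_of_length_eq_add_one (wf_subAt hwf hsub).1
  obtain ⟨t, hlast⟩ := Option.isSome_iff_exists.1 (List.getLast?_isSome.2 hne)
  cases t with
  | leaf => simp [(rightEmpty_iff hnd).2 ⟨cs, hsub, hlast⟩] at hre
  | node a' cs' =>
    exact ⟨a', (inRight_iff hnd).2 ⟨cs, hsub, by simp [hlast, mem_root]⟩,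
      fun b hb => eq_or_descIn_of_descIn_childRoot hwf hnd hsub (List.mem_of_getLast? hlast) hb⟩

end Ancestry

section Card

variable {s : ℕ → ℕ} {a b c d r x y i : ℕ} {T t u : STree} {cs : List STree}

theorem card_node_self : card s r x (.node r cs) = idxOf x cs := by
  simp [card]

theorem card_node_of_ne (h : r ≠ y) : card s y x (.node r cs) = cardL s y x cs := by
  simp [card, h]

theorem cardL_eq_card_of_mem (hnd : (labelsL cs).Nodup) (ht : t ∈ cs) (hy : mem y t = true)
    (hx : mem x t = true) : cardL s y x cs = card s y x t := by
  induction cs with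
  | nil => cases ht
  | cons u us ih =>
    rcases List.mem_cons.1 ht with rfl | ht'
    · rw [cardL, if_pos hy, if_pos hx]
    · rw [cardL, if_neg (by simp [mem_eq_false_of_mem_tail hnd ht' hy]),
        if_neg (by simp [mem_eq_false_of_mem_tail hnd ht' hx]), ih (nodup_cons hnd).2.1 ht']

theorem cardL_of_idxOf_lt (hx : memL x cs = true) (hy : memL y cs = true)
    (h : idxOf x cs < idxOf y cs) : cardL s y x cs = 0 := by
  induction cs with
  | nil => simp [memL] at hx
  | cons t ts ih =>
    cases hxt : mem x t
    · cases hyt : mem y t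
      · rw [idxOf_cons_of_not_mem hxt, idxOf_cons_of_not_mem hyt] at h
        rw [cardL, if_neg (by simp [hyt]), if_neg (by simp [hxt])]
        exact ih ((memL_cons.1 hx).resolve_left (by simp [hxt]))
          ((memL_cons.1 hy).resolve_left (by simp [hyt])) (by omega)
      · rw [idxOf_cons_of_mem hyt] at h
        omega
    · cases hyt : mem y t
      · rw [cardL, if_neg (by simp [hyt]), if_pos hxt]
      · rw [idxOf_cons_of_mem hxt, idxOf_cons_of_mem hyt] at h
        omega

theorem cardL_of_idxOf_gt (hx : memL x cs = true) (hy : memL y cs = true)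
    (h : idxOf y cs < idxOf x cs) : cardL s y x cs = s y := by
  induction cs with
  | nil => simp [memL] at hx
  | cons t ts ih =>
    cases hyt : mem y t
    · cases hxt : mem x t
      · rw [idxOf_cons_of_not_mem hxt, idxOf_cons_of_not_mem hyt] at h
        rw [cardL, if_neg (by simp [hyt]), if_neg (by simp [hxt])]
        exact ih ((memL_cons.1 hx).resolve_left (by simp [hxt]))
          ((memL_cons.1 hy).resolve_left (by simp [hyt])) (by omega)
      · rw [idxOf_cons_of_mem hxt] at h
        omega
    · cases hxt : mem x t
      · rw [cardL, if_pos hyt, if_neg (by simp [hxt]),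
          if_pos ((memL_cons.1 hx).resolve_left (by simp [hxt]))]
      · rw [idxOf_cons_of_mem hxt, idxOf_cons_of_mem hyt] at h
        omega

theorem cardL_le (h : ∀ t ∈ cs, mem x t = true → card s y x t ≤ s y) :
    cardL s y x cs ≤ s y := by
  induction cs with
  | nil => simp [cardL]
  | cons t ts ih =>
    rw [cardL]
    split_ifs with h₁ h₂
    exacts [h t List.mem_cons_self h₂, le_rfl, Nat.zero_le _, Nat.zero_le _,
      ih fun t ht => h t (List.mem_cons_of_mem _ ht)]

theorem card_le (hwf : wf s T) (hxy : x < y) (hx : mem x T = true) : card s y x T ≤ s y := by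
  induction T using childInduction with
  | leaf => simp [mem] at hx
  | node r cs ih =>
    by_cases hry : r = y
    · subst hry
      rw [card_node_self]
      have := idxOf_lt_length (memL_of_mem_node hx hxy.ne)
      have := hwf.1
      omega
    · rw [card_node_of_ne hry]
      exact cardL_le fun t ht => ih t ht (wf_of_mem hwf.2.2 ht)

theorem cardL_le_of_wfL (hwf : wfL s cs) (hxy : x < y) : cardL s y x cs ≤ s y :=
  cardL_le fun _ ht => card_le (wf_of_mem hwf ht) hxy

theorem card_subAt (hnd : (labels T).Nodup) (h : subAt y T = some u) (hx : mem x u = true) :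
    card s y x T = card s y x u := by
  induction T using childInduction with
  | leaf => simp [subAt] at h
  | node r cs ih =>
    by_cases hyr : y = r
    · subst hyr
      rw [subAt_node_self, Option.some_inj] at h
      rw [h]
    · rw [subAt_node_of_ne hyr] at h
      obtain ⟨t, ht, hyt, h⟩ := exists_mem_of_subAtL h
      rw [card_node_of_ne (Ne.symm hyr),
        cardL_eq_card_of_mem (nodup_node hnd).2 ht hyt (mem_of_subAt h hx),
        ih t ht (nodup_of_mem (nodup_node hnd).2 ht) h]

theorem card_eq_idxOf (hnd : (labels T).Nodup) (h : subAt y T = some (.node y cs))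
    (hx : memL x cs = true) : card s y x T = idxOf x cs := by
  rw [card_subAt hnd h (mem_node.2 (.inr hx)), card_node_self]

theorem card_eq_of_descIn (hnd : (labels T).Nodup) (hcb : descIn c b T = true)
    (hba : descIn b a T = true) : card s c a T = card s c b T := by
  obtain ⟨cs, hsub, hb⟩ := (descIn_iff hnd).1 hcb
  obtain ⟨t, ht, hbt⟩ := memL_iff_exists.1 hb
  have hat := mem_of_descIn_of_mem_child hnd hsub ht hbt hba
  rw [card_eq_idxOf hnd hsub (memL_of_mem ht hat), card_eq_idxOf hnd hsub hb,
    idxOf_eq_of_mem (nodup_node (nodup_subAt hnd hsub)).2 ht hat hbt]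

theorem idxOf_eq_length_sub_one_iff (hnd : (labelsL cs).Nodup) (hx : memL x cs = true) :
    idxOf x cs = cs.length - 1 ↔ cs.getLast?.any (mem x) = true := by
  have hlen := idxOf_lt_length hx
  rw [List.getLast?_eq_getElem?, List.getElem?_eq_getElem (by omega), Option.any_some]
  exact ⟨fun h => by simpa only [h] using mem_getElem_idxOf hx,
    idxOf_eq_of_mem_getElem hnd (by omega)⟩

theorem inRight_iff_card_eq (hwf : wf s T) (hnd : (labels T).Nodup)
    (h : descIn c x T = true) : inRight c x T = true ↔ card s c x T = s c := by
  obtain ⟨cs, hsub, hx⟩ := (descIn_iff hnd).1 h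
  have hlen : cs.length = s c + 1 := (wf_subAt hwf hsub).1
  rw [card_eq_idxOf hnd hsub hx, inRight_iff hnd, hsub]
  simp only [Option.some_inj, node.injEq, true_and, exists_eq_left']
  rw [← idxOf_eq_length_sub_one_iff (nodup_node (nodup_subAt hnd hsub)).2 hx, hlen,
    Nat.add_sub_cancel]

end Card

section TransitivityPlanarity

variable {s : ℕ → ℕ} {a b c r x : ℕ} {T : STree} {cs : List STree}

theorem cardL_trans (hnd : (labelsL cs).Nodup) (hwf : wfL s cs) (ha : memL a cs = true)
    (hb : memL b cs = true) (hc : memL c cs = true) (hbc : b < c)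
    (hchild : ∀ t ∈ cs, mem a t = true → mem b t = true → mem c t = true →
      card s b a t = 0 ∨ card s c b t ≤ card s c a t) :
    cardL s b a cs = 0 ∨ cardL s c b cs ≤ cardL s c a cs := by
  rcases lt_trichotomy (idxOf a cs) (idxOf b cs) with hab' | hab' | hab'
  · exact .inl (cardL_of_idxOf_lt ha hb hab')
  · rcases lt_trichotomy (idxOf b cs) (idxOf c cs) with hbc' | hbc' | hbc'
    · rw [cardL_of_idxOf_lt hb hc hbc']
      exact .inr (Nat.zero_le _)
    · obtain ⟨t, ht, hat, hbt⟩ := exists_mem_of_idxOf_eq ha hb hab'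
      obtain ⟨t', ht', hbt', hct⟩ := exists_mem_of_idxOf_eq hb hc hbc'
      obtain rfl := eq_of_mem_of_mem hnd ht ht' hbt hbt'
      rw [cardL_eq_card_of_mem hnd ht hbt hat, cardL_eq_card_of_mem hnd ht hct hbt,
        cardL_eq_card_of_mem hnd ht hct hat]
      exact hchild t ht hat hbt hct
    · rw [cardL_of_idxOf_gt hb hc hbc', cardL_of_idxOf_gt ha hc (by omega)]
      exact .inr le_rfl
  · right
    rcases lt_or_ge (idxOf b cs) (idxOf c cs) with hbc' | hcb'
    · rw [cardL_of_idxOf_lt hb hc hbc']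
      exact Nat.zero_le _
    · rw [cardL_of_idxOf_gt ha hc (by omega)]
      exact cardL_le_of_wfL hwf hbc

theorem cardL_planar (hnd : (labelsL cs).Nodup) (hwf : wfL s cs) (ha : memL a cs = true)
    (hb : memL b cs = true) (hc : memL c cs = true) (hac : a < c)
    (hchild : ∀ t ∈ cs, mem a t = true → mem b t = true → mem c t = true →
      card s b a t = s b ∨ card s c a t ≤ card s c b t) :
    cardL s b a cs = s b ∨ cardL s c a cs ≤ cardL s c b cs := by
  rcases lt_trichotomy (idxOf a cs) (idxOf b cs) with hab' | hab' | hab'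
  · right
    rcases lt_or_ge (idxOf a cs) (idxOf c cs) with hac' | hca'
    · rw [cardL_of_idxOf_lt ha hc hac']
      exact Nat.zero_le _
    · rw [cardL_of_idxOf_gt hb hc (by omega)]
      exact cardL_le_of_wfL hwf hac
  · rcases lt_trichotomy (idxOf a cs) (idxOf c cs) with hac' | hac' | hac'
    · rw [cardL_of_idxOf_lt ha hc hac']
      exact .inr (Nat.zero_le _)
    · obtain ⟨t, ht, hat, hbt⟩ := exists_mem_of_idxOf_eq ha hb hab'
      obtain ⟨t', ht', hat', hct⟩ := exists_mem_of_idxOf_eq ha hc hac'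
      obtain rfl := eq_of_mem_of_mem hnd ht ht' hat hat'
      rw [cardL_eq_card_of_mem hnd ht hbt hat, cardL_eq_card_of_mem hnd ht hct hbt,
        cardL_eq_card_of_mem hnd ht hct hat]
      exact hchild t ht hat hbt hct
    · rw [cardL_of_idxOf_gt ha hc hac', cardL_of_idxOf_gt hb hc (by omega)]
      exact .inr le_rfl
  · exact .inl (cardL_of_idxOf_gt ha hb hab')

theorem card_trans (hwf : wf s T) (hnd : (labels T).Nodup) (ha : mem a T = true)
    (hb : mem b T = true) (hc : mem c T = true) (hab : a < b) (hbc : b < c) :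
    card s b a T = 0 ∨ card s c b T ≤ card s c a T := by
  induction T using childInduction with
  | leaf => simp [mem] at ha
  | node r cs ih =>
    have hcr : c ≤ r := le_of_wf_node hwf hc
    have haL := memL_of_mem_node ha (by omega)
    have hbL := memL_of_mem_node hb (by omega)
    rw [card_node_of_ne (show r ≠ b by omega)]
    rcases hcr.eq_or_lt with rfl | hcr
    · rw [card_node_self, card_node_self]
      rcases lt_or_ge (idxOf a cs) (idxOf b cs) with h | h
      exacts [.inl (cardL_of_idxOf_lt haL hbL h), .inr h]
    · rw [card_node_of_ne hcr.ne', card_node_of_ne hcr.ne']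
      exact cardL_trans (nodup_node hnd).2 hwf.2.2 haL hbL (memL_of_mem_node hc hcr.ne) hbc
        fun t ht => ih t ht (wf_of_mem hwf.2.2 ht) (nodup_of_mem (nodup_node hnd).2 ht)

theorem card_planar (hwf : wf s T) (hnd : (labels T).Nodup) (ha : mem a T = true)
    (hb : mem b T = true) (hc : mem c T = true) (hab : a < b) (hbc : b < c) :
    card s b a T = s b ∨ card s c a T ≤ card s c b T := by
  induction T using childInduction with
  | leaf => simp [mem] at ha
  | node r cs ih =>
    have hcr : c ≤ r := le_of_wf_node hwf hc
    have haL := memL_of_mem_node ha (by omega)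
    have hbL := memL_of_mem_node hb (by omega)
    rw [card_node_of_ne (show r ≠ b by omega)]
    rcases hcr.eq_or_lt with rfl | hcr
    · rw [card_node_self, card_node_self]
      rcases le_or_gt (idxOf a cs) (idxOf b cs) with h | h
      exacts [.inr h, .inl (cardL_of_idxOf_gt haL hbL h)]
    · rw [card_node_of_ne hcr.ne', card_node_of_ne hcr.ne']
      exact cardL_planar (nodup_node hnd).2 hwf.2.2 haL hbL (memL_of_mem_node hc hcr.ne)
        (hab.trans hbc)
        fun t ht => ih t ht (wf_of_mem hwf.2.2 ht) (nodup_of_mem (nodup_node hnd).2 ht)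

end TransitivityPlanarity

section Separation

variable {s : ℕ → ℕ} {a c r x i : ℕ} {T : STree} {cs : List STree}

theorem exists_card_ne_of_descIn_eq_false (hwf : wf s T) (hnd : (labels T).Nodup)
    (ha : mem a T = true) (hc : mem c T = true) (hac : a < c) (h : descIn c a T = false) :
    ∃ d, c < d ∧ mem d T = true ∧ card s d a T ≠ card s d c T := by
  induction T using childInduction with
  | leaf => simp [mem] at ha
  | node r cs ih =>
    have hcr : c ≤ r := le_of_wf_node hwf hc
    have haL := memL_of_mem_node ha (by omega)
    rcases hcr.eq_or_lt with rfl | hcr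
    · simp [descIn_node.2 (.inl ⟨rfl, haL⟩)] at h
    have hcL := memL_of_mem_node hc hcr.ne
    by_cases hidx : idxOf a cs = idxOf c cs
    · obtain ⟨t, ht, hat, hct⟩ := exists_mem_of_idxOf_eq haL hcL hidx
      have hdt : descIn c a t = false := by
        rw [← Bool.not_eq_true]
        exact fun hdt => by simp [descIn_node.2 (.inr ⟨t, ht, hdt⟩)] at h
      obtain ⟨d, hcd, hdt', hne⟩ :=
        ih t ht (wf_of_mem hwf.2.2 ht) (nodup_of_mem (nodup_node hnd).2 ht) hat hct hdt
      have hrd : r ≠ d := (lt_of_wf_node hwf (memL_of_mem ht hdt')).ne'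
      refine ⟨d, hcd, mem_node.2 (.inr (memL_of_mem ht hdt')), ?_⟩
      rwa [card_node_of_ne hrd, card_node_of_ne hrd,
        cardL_eq_card_of_mem (nodup_node hnd).2 ht hdt' hat,
        cardL_eq_card_of_mem (nodup_node hnd).2 ht hdt' hct]
    · exact ⟨r, hcr, mem_root, by rwa [card_node_self, card_node_self]⟩

theorem mem_getElem_iff (hwf : wf s (.node r cs)) (hnd : (labels (.node r cs)).Nodup)
    (hi : i < cs.length) :
    mem x cs[i] = true ↔ mem x (.node r cs) = true ∧ x < r ∧ card s r x (.node r cs) = i := by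
  rw [card_node_self]
  constructor
  · intro hx
    have hxL := memL_of_mem (List.getElem_mem hi) hx
    exact ⟨mem_node.2 (.inr hxL), lt_of_wf_node hwf hxL,
      idxOf_eq_of_mem_getElem (nodup_node hnd).2 hi hx⟩
  · rintro ⟨hx, hxr, rfl⟩
    exact mem_getElem_idxOf (memL_of_mem_node hx hxr.ne)

theorem eq_of_card_eq {T' : STree} (hwf : wf s T) (hwf' : wf s T') (hnd : (labels T).Nodup)
    (hnd' : (labels T').Nodup) (hmem : ∀ x, mem x T = mem x T')
    (hcard : ∀ y x, x < y → mem x T = true → mem y T = true →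
      card s y x T = card s y x T') :
    T = T' := by
  induction T using childInduction generalizing T' with
  | leaf =>
    cases T' with
    | leaf => rfl
    | node r' _ => simpa [mem, mem_root] using hmem r'
  | node r cs ih =>
    obtain _ | ⟨r', cs'⟩ := T'
    · simpa [mem, mem_root] using hmem r
    obtain rfl : r = r' := le_antisymm (le_of_wf_node hwf' (hmem r ▸ mem_root))
      (le_of_wf_node hwf ((hmem r').symm ▸ mem_root))
    refine congrArg _ (List.ext_getElem (hwf.1.trans hwf'.1.symm) fun i hi hi' => ?_)
    have hti := List.getElem_mem hi
    have hti' := List.getElem_mem hi'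
    have hchild : ∀ x, mem x cs[i] = mem x cs'[i] := fun x => Bool.eq_iff_iff.2 <| by
      rw [mem_getElem_iff hwf hnd hi, mem_getElem_iff hwf' hnd' hi', hmem x]
      refine and_congr_right fun hx => and_congr_right fun hxr => ?_
      rw [hcard r x hxr ((hmem x).symm ▸ hx) mem_root]
    refine ih _ hti (wf_of_mem hwf.2.2 hti) (wf_of_mem hwf'.2.2 hti')
      (nodup_of_mem (nodup_node hnd).2 hti) (nodup_of_mem (nodup_node hnd').2 hti') hchild ?_
    intro y x hxy hx hy
    have hyr : r ≠ y := (lt_of_wf_node hwf (memL_of_mem hti hy)).ne'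
    have := hcard y x hxy (mem_node.2 (.inr (memL_of_mem hti hx)))
      (mem_node.2 (.inr (memL_of_mem hti hy)))
    rwa [card_node_of_ne hyr, card_node_of_ne hyr,
      cardL_eq_card_of_mem (nodup_node hnd).2 hti hy hx,
      cardL_eq_card_of_mem (nodup_node hnd').2 hti' (hchild y ▸ hy) (hchild x ▸ hx)] at this

end Separation

section DecreasingTree

variable {n : ℕ} {s : ℕ → ℕ} {T T' : STree} {x y : ℕ}

theorem IsSDecreasingTree.mem_iff (hT : IsSDecreasingTree n s T) :
    mem x T = true ↔ 1 ≤ x ∧ x ≤ n := by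
  rw [mem_iff_mem_labels, hT.2.mem_iff, List.mem_range'_1]
  omega

theorem IsSDecreasingTree.nodup (hT : IsSDecreasingTree n s T) : (labels T).Nodup :=
  hT.2.nodup_iff.2 List.nodup_range'

theorem treeInv_of_not_mem_range (h : ¬(1 ≤ x ∧ x < y ∧ y ≤ n)) :
    treeInv n s T y x = 0 := by
  rw [treeInv, if_neg h]

theorem treeInv_eq_card (h : 1 ≤ x ∧ x < y ∧ y ≤ n) : treeInv n s T y x = card s y x T := by
  rw [treeInv, if_pos h]

theorem mem_range_of_treeInv_lt (h : treeInv n s T y x < treeInv n s T' y x) :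
    1 ≤ x ∧ x < y ∧ y ≤ n := by
  by_contra hxy
  rw [treeInv_of_not_mem_range hxy, treeInv_of_not_mem_range hxy] at h
  exact lt_irrefl 0 h

theorem IsSDecreasingTree.isTreeInvSet (hT : IsSDecreasingTree n s T) :
    IsTreeInvSet n s (treeInv n s T) := by
  have hmem {x} (h₁ : 1 ≤ x) (h₂ : x ≤ n) : mem x T = true := hT.mem_iff.2 ⟨h₁, h₂⟩
  refine ⟨⟨fun y x => ?_, fun y x => treeInv_of_not_mem_range⟩, fun a b c hab hbc => ?_,
    fun a b c hab hbc => ?_⟩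
  · by_cases h : 1 ≤ x ∧ x < y ∧ y ≤ n
    · rw [treeInv_eq_card h]
      exact card_le hT.1 h.2.1 (hmem h.1 (by omega))
    · rw [treeInv_of_not_mem_range h]
      exact Nat.zero_le _
  · by_cases h : 1 ≤ a ∧ c ≤ n
    · rw [treeInv_eq_card (by omega), treeInv_eq_card (by omega), treeInv_eq_card (by omega)]
      exact card_trans hT.1 hT.nodup (hmem h.1 (by omega)) (hmem (by omega) (by omega))
        (hmem (by omega) h.2) hab hbc
    · by_cases ha : 1 ≤ a
      · rw [treeInv_of_not_mem_range (n := n) (y := c) (x := b) (by omega)]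
        exact .inr (Nat.zero_le _)
      · exact .inl (treeInv_of_not_mem_range (by omega))
  · by_cases h : 1 ≤ a ∧ c ≤ n
    · rw [treeInv_eq_card (by omega), treeInv_eq_card (by omega), treeInv_eq_card (by omega)]
      exact card_planar hT.1 hT.nodup (hmem h.1 (by omega)) (hmem (by omega) (by omega))
        (hmem (by omega) h.2) hab hbc
    · rw [treeInv_of_not_mem_range (n := n) (y := c) (x := a) (by omega)]
      exact .inr (Nat.zero_le _)

theorem IsSDecreasingTree.treeInv_injective (hT : IsSDecreasingTree n s T)
    (hT' : IsSDecreasingTree n s T') (h : treeInv n s T = treeInv n s T') : T = T' := by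
  refine eq_of_card_eq hT.1 hT'.1 hT.nodup hT'.nodup
    (fun x => Bool.eq_iff_iff.2 (hT.mem_iff.trans hT'.mem_iff.symm)) fun y x hxy hx hy => ?_
  have hr : 1 ≤ x ∧ x < y ∧ y ≤ n := ⟨(hT.mem_iff.1 hx).1, hxy, (hT.mem_iff.1 hy).2⟩
  rw [← treeInv_eq_card hr, ← treeInv_eq_card hr, h]

end DecreasingTree

section Ascent

variable {n : ℕ} {s : ℕ → ℕ} {T T' : STree}

theorem exists_treeInv_lt (hT : IsSDecreasingTree n s T) (hT' : IsSDecreasingTree n s T')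
    (hle : sWeakLE n s T T') (hne : T ≠ T') :
    ∃ y x, treeInv n s T y x < treeInv n s T' y x := by
  by_contra! h
  exact hne (hT.treeInv_injective hT' (funext₂ fun y x => (hle y x).antisymm (h y x)))

theorem descIn_of_treeInv_lt (hT : IsSDecreasingTree n s T) (hT' : IsSDecreasingTree n s T')
    {c a : ℕ} (hlt : treeInv n s T c a < treeInv n s T' c a)
    (hrows : ∀ d, c < d → ∀ x, treeInv n s T d x = treeInv n s T' d x) :
    descIn c a T = true := by
  obtain ⟨ha, hac, hcn⟩ := mem_range_of_treeInv_lt hlt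
  -- Otherwise a common ancestor `d > c` separating `a` from `c` would see their relative order
  -- change, although row `d` is unchanged.
  by_contra h
  obtain ⟨d, hcd, hd, hne⟩ := exists_card_ne_of_descIn_eq_false hT.1 hT.nodup
    (hT.mem_iff.2 ⟨ha, by omega⟩) (hT.mem_iff.2 ⟨by omega, hcn⟩) hac (by simpa using h)
  have hdn := (hT.mem_iff.1 hd).2
  rw [← treeInv_eq_card ⟨ha, by omega, hdn⟩, ← treeInv_eq_card ⟨by omega, hcd, hdn⟩]
    at hne
  have hda := hrows d hcd a
  have hdc := hrows d hcd c
  have hbound := hT'.isTreeInvSet.1.1 c a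
  rcases hne.lt_or_gt with hlt' | hgt
  · rcases hT'.isTreeInvSet.2.1 a c d hac hcd with h0 | h' <;> omega
  · rcases hT.isTreeInvSet.2.2 a c d hac hcd with hs | h' <;> omega

theorem exists_descIn_treeInv_lt (hT : IsSDecreasingTree n s T)
    (hT' : IsSDecreasingTree n s T') (hle : sWeakLE n s T T')
    (h : ∃ y x, treeInv n s T y x < treeInv n s T' y x) :
    ∃ c a, descIn c a T = true ∧ treeInv n s T c a < treeInv n s T' c a := by
  classical
  obtain ⟨y, x, hyx⟩ := h
  obtain ⟨a, ha⟩ := Nat.findGreatest_spec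
    (P := fun c => ∃ x, treeInv n s T c x < treeInv n s T' c x)
    (mem_range_of_treeInv_lt hyx).2.2 ⟨x, hyx⟩
  refine ⟨_, a, descIn_of_treeInv_lt hT hT' ha fun d hd x => ?_, ha⟩
  refine (hle d x).antisymm (not_lt.1 fun hdx => ?_)
  exact Nat.findGreatest_is_greatest hd (mem_range_of_treeInv_lt hdx).2.2 ⟨x, hdx⟩

theorem inRight_of_extremal (hT : IsSDecreasingTree n s T) (hT' : IsSDecreasingTree n s T')
    {c a b : ℕ} (hd : descIn c a T = true) (hlt : treeInv n s T c a < treeInv n s T' c a)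
    (hmin : ∀ c' < c, ∀ x, descIn c' x T = true → treeInv n s T c' x = treeInv n s T' c' x)
    (hmax : ∀ b, a < b → descIn c b T = true → treeInv n s T c b = treeInv n s T' c b)
    (hab : a < b) (hbc : b < c) (hba : descIn b a T = true) : inRight b a T = true := by
  have hcb := descIn_of_common_descendant hT.1 hT.nodup hd hba hbc
  obtain ⟨ha, -, hcn⟩ := mem_range_of_treeInv_lt hlt
  have hsame : treeInv n s T c b = treeInv n s T c a := by
    rw [treeInv_eq_card ⟨by omega, hbc, hcn⟩, treeInv_eq_card ⟨ha, by omega, hcn⟩,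
      card_eq_of_descIn hT.nodup hcb hba]
  have hT'ba : treeInv n s T' b a = s b :=
    (hT'.isTreeInvSet.2.2 a b c hab hbc).resolve_right (by rw [← hmax b hab hcb]; omega)
  rw [inRight_iff_card_eq hT.1 hT.nodup hba, ← treeInv_eq_card (n := n) ⟨ha, hab, by omega⟩,
    hmin b hbc a hba, hT'ba]

theorem exists_descIn_treeInv_lt_inRight (hT : IsSDecreasingTree n s T)
    (hT' : IsSDecreasingTree n s T') (hle : sWeakLE n s T T')
    (h : ∃ c a, descIn c a T = true ∧ treeInv n s T c a < treeInv n s T' c a) :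
    ∃ c a, descIn c a T = true ∧ treeInv n s T c a < treeInv n s T' c a ∧
      ∀ b, a < b → b < c → descIn b a T = true → inRight b a T = true := by
  classical
  obtain ⟨a₀, ha₀⟩ := Nat.find_spec h
  obtain ⟨hd, hlt⟩ := Nat.findGreatest_spec
    (P := fun a => descIn (Nat.find h) a T = true ∧
      treeInv n s T (Nat.find h) a < treeInv n s T' (Nat.find h) a)
    (mem_range_of_treeInv_lt ha₀.2).2.1.le ha₀
  refine ⟨_, _, hd, hlt, fun b hab hbc => inRight_of_extremal hT hT' hd hlt ?_ ?_ hab hbc⟩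
  · intro c' hc' x hx
    exact (hle c' x).antisymm (not_lt.1 fun hlt' => Nat.find_min h hc' ⟨x, hx, hlt'⟩)
  · intro b hab hb
    exact (hle _ b).antisymm (not_lt.1 fun hlt' => Nat.findGreatest_is_greatest hab
      (mem_range_of_treeInv_lt hlt').2.1.le ⟨hb, hlt'⟩)

theorem treeInv_lt_of_inRight (hT : IsSDecreasingTree n s T) (hT' : IsSDecreasingTree n s T')
    (hle : sWeakLE n s T T') {c a a' : ℕ} (hd : descIn c a T = true)
    (hlt : treeInv n s T c a < treeInv n s T' c a) (hir : inRight a a' T = true) (hs : 0 < s a) :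
    treeInv n s T c a' < treeInv n s T' c a' := by
  have hda' := descIn_of_inRight hT.nodup hir
  have ha'a := descIn_lt hT.1 hT.nodup hda'
  obtain ⟨ha, hac, hcn⟩ := mem_range_of_treeInv_lt hlt
  have ha' : 1 ≤ a' := (hT.mem_iff.1 (mem_right_of_descIn hT.nodup hda')).1
  have hsame : treeInv n s T c a' = treeInv n s T c a := by
    rw [treeInv_eq_card ⟨ha', by omega, hcn⟩, treeInv_eq_card ⟨ha, hac, hcn⟩,
      card_eq_of_descIn hT.nodup hd hda']
  have hfull : treeInv n s T a a' = s a := by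
    rw [treeInv_eq_card ⟨ha', ha'a, by omega⟩]
    exact (inRight_iff_card_eq hT.1 hT.nodup hda').1 hir
  have := hle a a'
  rcases hT'.isTreeInvSet.2.1 a' a c ha'a hac with h | h <;> omega

theorem exists_treeAscent_of_inRight (hT : IsSDecreasingTree n s T)
    (hT' : IsSDecreasingTree n s T') (hle : sWeakLE n s T T') {c a : ℕ}
    (hd : descIn c a T = true) (hlt : treeInv n s T c a < treeInv n s T' c a)
    (hchain : ∀ b, a < b → b < c → descIn b a T = true → inRight b a T = true) :
    ∃ a', IsTreeAscent s T a' c ∧ treeInv n s T c a' < treeInv n s T' c a' := by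
  induction a using Nat.strong_induction_on with
  | _ a ih =>
  obtain ⟨ha, hac, hcn⟩ := mem_range_of_treeInv_lt hlt
  by_cases hre : 0 < s a ∧ rightEmpty a T = false
  · obtain ⟨a', hir, hanc⟩ := exists_inRight_of_rightEmpty_eq_false hT.1 hT.nodup
      (hT.mem_iff.2 ⟨ha, by omega⟩) hre.2
    have hda' := descIn_of_inRight hT.nodup hir
    refine ih a' (descIn_lt hT.1 hT.nodup hda') (descIn_trans hT.nodup hd hda')
      (treeInv_lt_of_inRight hT hT' hle hd hlt hir hre.1) fun b _ hbc hb => ?_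
    rcases hanc b hb with rfl | hba
    · exact hir
    · exact inRight_of_descIn hT.nodup (hchain b (descIn_lt hT.1 hT.nodup hba) hbc hba) hda'
  · refine ⟨a, ⟨hac, hd, ?_, hchain, fun hs => ?_⟩, hlt⟩
    · rw [← Bool.not_eq_true, inRight_iff_card_eq hT.1 hT.nodup hd,
        ← treeInv_eq_card ⟨ha, hac, hcn⟩]
      have := hT'.isTreeInvSet.1.1 c a
      omega
    · simpa [hs] using hre

end Ascent

end STree

open STree in
/-- If `T ≺ T'` in the `s`-weak order, then there is a tree-ascent `(a,c)` of
`T` whose cardinality increases in `T'`. -/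
theorem exists_increasing_treeAscent (n : ℕ) (s : ℕ → ℕ) (T T' : STree)
    (hT : IsSDecreasingTree n s T) (hT' : IsSDecreasingTree n s T')
    (hle : sWeakLE n s T T') (hne : T ≠ T') :
    ∃ a c : ℕ, IsTreeAscent s T a c ∧
      treeInv n s T c a < treeInv n s T' c a := by
  obtain ⟨c, a, hd, hlt, hchain⟩ := exists_descIn_treeInv_lt_inRight hT hT' hle
    (exists_descIn_treeInv_lt hT hT' hle (exists_treeInv_lt hT hT' hle hne))
  obtain ⟨a', hasc, hlt'⟩ := exists_treeAscent_of_inRight hT hT' hle hd hlt hchain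
  exact ⟨a', c, hasc, hlt'⟩
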